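/- Consider a zero-sum normal-form game with payoff matrix A ∈ ℝ^{m×n} that has a unique Nash equilibrium (x*, y*) lying in the interior of Δ^m × Δ^n, and assume (x*, y*) ≠ ((1/m)·1_m, (1/n)·1_n). Then for every μ_x > 0 with μ_x ≠ ((1_m/m)ᵀ A (1_n/n) − v*) / (‖x*‖² − 1/m), the minimax strategy x^μ of the independently perturbed game satisfies x^μ ≠ x*; and for every μ_y > 0 with μ_y ≠ (v* − (1_m/m)ᵀ A (1_n/n)) / (‖y*‖² − 1/n), the maximin strategy y^μ of the independently perturbed game satisfies y^μ ≠ y*. -/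

import Mathlib

open scoped RealInnerProductSpace Classical

noncomputable section

abbrev E (k : ℕ) : Type := EuclideanSpace ℝ (Fin k)

/-- Interpret a plain vector as an element of Euclidean space. -/
def toE {k : ℕ} (v : Fin k → ℝ) : E k := (WithLp.equiv 2 (Fin k → ℝ)).symm v

/-- The bilinear payoff `xᵀ A y`. -/
def pay {m n : ℕ} (A : Matrix (Fin m) (Fin n) ℝ) (x : E m) (y : E n) : ℝ :=
  ⟪x, toE (A.mulVec y)⟫

/-- Euclidean projection onto a set (well-defined for nonempty closed convex sets). -/
def projOn {k : ℕ} (S : Set (E k)) (x : E k) : E k :=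
  if h : ∃ p ∈ S, ∀ q ∈ S, ‖x - p‖ ≤ ‖x - q‖ then h.choose else x

/-- The largest singular value (ℓ²-operator norm) of a matrix. -/
def matNorm {m n : ℕ} (A : Matrix (Fin m) (Fin n) ℝ) : ℝ :=
  ‖(Matrix.toEuclideanLin A).toContinuousLinearMap‖

def gmax {m n : ℕ} (A : Matrix (Fin m) (Fin n) ℝ) (Y : Set (E n)) (x : E m) : ℝ :=
  sSup ((pay A x) '' Y)

def vStar {m n : ℕ} (A : Matrix (Fin m) (Fin n) ℝ) (X : Set (E m)) (Y : Set (E n)) : ℝ :=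
  sInf (gmax A Y '' X)

def minimaxSet {m n : ℕ} (A : Matrix (Fin m) (Fin n) ℝ) (X : Set (E m)) (Y : Set (E n)) :
    Set (E m) :=
  {x | x ∈ X ∧ ∀ x' ∈ X, gmax A Y x ≤ gmax A Y x'}

def hmin {m n : ℕ} (A : Matrix (Fin m) (Fin n) ℝ) (X : Set (E m)) (μ : ℝ) (y : E n) : ℝ :=
  sInf ((fun x => pay A x y + μ / 2 * ‖x‖ ^ 2) '' X)

def maximinSet {m n : ℕ} (A : Matrix (Fin m) (Fin n) ℝ) (X : Set (E m)) (Y : Set (E n))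
    (μ : ℝ) : Set (E n) :=
  {y | y ∈ Y ∧ ∀ y' ∈ Y, hmin A X μ y' ≤ hmin A X μ y}

def diamXY {m n : ℕ} (X : Set (E m)) (Y : Set (E n)) : ℝ :=
  sSup {d | ∃ x ∈ X, ∃ y ∈ Y, ∃ x' ∈ X, ∃ y' ∈ Y,
    d = Real.sqrt (‖x - x'‖ ^ 2 + ‖y - y'‖ ^ 2)}

def prodNorm {m n : ℕ} (u : E m) (v : E n) : ℝ := Real.sqrt (‖u‖ ^ 2 + ‖v‖ ^ 2)

def simplex (k : ℕ) : Set (E k) := {x | (∀ i, 0 ≤ x i) ∧ ∑ i, x i = 1}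

def unif (k : ℕ) : E k := WithLp.toLp 2 (fun _ => (k : ℝ)⁻¹)

def isPolytope {k : ℕ} (S : Set (E k)) : Prop :=
  ∃ s : Finset (E k), s.Nonempty ∧ S = convexHull ℝ (s : Set (E k))

lemma pay_eq {m n : ℕ} (A : Matrix (Fin m) (Fin n) ℝ) (x : E m) (y : E n) :
    pay A x y = ∑ i, x i * (A.mulVec y) i := by
  simp [pay, toE, PiLp.inner_apply, RCLike.inner_apply, conj_trivial]
  exact Finset.sum_congr rfl fun _ _ => mul_comm _ _

lemma pay_expand {m n : ℕ} (A : Matrix (Fin m) (Fin n) ℝ) (x : E m) (y : E n) :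
    pay A x y = ∑ j, y j * (∑ i, x i * A i j) := by
  rw [pay_eq]
  simp only [Matrix.mulVec, dotProduct, Finset.mul_sum, Finset.sum_mul]
  rw [Finset.sum_comm]
  apply Finset.sum_congr rfl; intro j _; apply Finset.sum_congr rfl; intro i _; ring

lemma normsq {k : ℕ} (x : E k) : ‖x‖ ^ 2 = ∑ i, (x i) ^ 2 := by
  rw [EuclideanSpace.norm_eq, Real.sq_sqrt (by positivity)]
  simp [sq_abs]

lemma unif_mem {k : ℕ} (hk : 0 < k) : unif k ∈ simplex k := by
  constructor
  · intro i; show (0:ℝ) ≤ (k : ℝ)⁻¹; positivity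
  · simp [unif, Finset.sum_const, Finset.card_univ]
    field_simp

lemma normsq_sub_unif {k : ℕ} (hk : 0 < k) (y : E k) (hy : ∑ i, y i = 1) :
    ∑ i, (y i - 1/(k:ℝ))^2 = ‖y‖^2 - 1/(k:ℝ) := by
  have hk0 : (k:ℝ) ≠ 0 := Nat.cast_ne_zero.mpr hk.ne'
  rw [normsq]
  have h1 : ∀ i ∈ Finset.univ, (y i - 1/(k:ℝ))^2
      = (y i)^2 - 2/(k:ℝ) * y i + 1/(k:ℝ)^2 := fun i _ => by ring
  rw [Finset.sum_congr rfl h1]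
  rw [Finset.sum_add_distrib, Finset.sum_sub_distrib, ← Finset.mul_sum, hy,
    Finset.sum_const, Finset.card_univ, Fintype.card_fin, nsmul_eq_mul]
  field_simp
  ring

lemma eq_unif_of_min {k : ℕ} (hk : 0 < k) (y : E k) (hy : y ∈ simplex k)
    (hmin : ∀ z ∈ simplex k, ‖y‖^2 ≤ ‖z‖^2) : y = unif k := by
  have hk0 : (k:ℝ) ≠ 0 := Nat.cast_ne_zero.mpr hk.ne'
  have h2 : ‖(unif k : E k)‖^2 = 1/(k:ℝ) := by
    rw [normsq]; simp [unif, Finset.sum_const, Finset.card_univ]; field_simp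
  have h3 : ∑ i, (y i - 1/(k:ℝ))^2 ≤ 0 := by
    rw [normsq_sub_unif hk y hy.2]
    have := hmin _ (unif_mem hk); linarith [h2 ▸ this]
  have h4 := (Finset.sum_eq_zero_iff_of_nonneg (fun i _ => sq_nonneg (y i - 1/(k:ℝ)))).mp
    (le_antisymm h3 (Finset.sum_nonneg fun i _ => sq_nonneg _))
  ext i
  have h5 := h4 i (Finset.mem_univ i)
  have : y i = 1/(k:ℝ) := by nlinarith [sq_nonneg (y i - 1/(k:ℝ))]
  simpa [unif, one_div] using this

lemma normsq_sub_pos {k : ℕ} (hk : 0 < k) (y : E k) (hy : y ∈ simplex k) (hne : y ≠ unif k) :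
    0 < ‖y‖^2 - 1/(k:ℝ) := by
  rw [← normsq_sub_unif hk y hy.2]
  rcases (Finset.sum_nonneg (fun i (_ : i ∈ Finset.univ) => sq_nonneg (y i - 1/(k:ℝ)))).lt_or_eq with h | h
  · exact h
  · exfalso; apply hne
    have h4 := (Finset.sum_eq_zero_iff_of_nonneg (fun i _ => sq_nonneg (y i - 1/(k:ℝ)))).mp h.symm
    ext i
    have h5 := h4 i (Finset.mem_univ i)
    have : y i = 1/(k:ℝ) := by nlinarith [sq_nonneg (y i - 1/(k:ℝ))]
    simpa [unif, one_div] using this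

lemma weighted_const {k : ℕ} (hk : 0 < k) (f : Fin k → ℝ) (hf : ∀ i j, f i = f j)
    (w : E k) (hw : w ∈ simplex k) : ∑ i, w i * f i = f ⟨0, hk⟩ := by
  have h1 : ∀ i ∈ Finset.univ, w i * f i = w i * f ⟨0,hk⟩ := fun i _ => by rw [hf i ⟨0,hk⟩]
  rw [Finset.sum_congr rfl h1, ← Finset.sum_mul, hw.2, one_mul]

lemma eq_of_le_weighted {k : ℕ} (f : Fin k → ℝ) (v : ℝ) (w : Fin k → ℝ)
    (hle : ∀ j, f j ≤ v) (hpos : ∀ j, 0 < w j) (hsum : ∑ j, w j = 1)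
    (heq : ∑ j, w j * f j = v) : ∀ j, f j = v := by
  by_contra h; push_neg at h; obtain ⟨j0, hj0⟩ := h
  have hlt : ∑ j, w j * f j < ∑ j, w j * v := by
    apply Finset.sum_lt_sum (fun j _ => by nlinarith [hpos j, hle j])
    exact ⟨j0, Finset.mem_univ _, by nlinarith [hpos j0, lt_of_le_of_ne (hle j0) hj0]⟩
  rw [← Finset.sum_mul, hsum, one_mul, heq] at hlt
  exact lt_irrefl v hlt

lemma eq_of_ge_weighted {k : ℕ} (f : Fin k → ℝ) (v : ℝ) (w : Fin k → ℝ)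
    (hge : ∀ j, v ≤ f j) (hpos : ∀ j, 0 < w j) (hsum : ∑ j, w j = 1)
    (heq : ∑ j, w j * f j = v) : ∀ j, f j = v := by
  have h := eq_of_le_weighted (fun j => -(f j)) (-v) w (fun j => neg_le_neg (hge j)) hpos hsum
    (by simp only [mul_neg, Finset.sum_neg_distrib, heq])
  intro j; have hj := h j; linarith

lemma basis_mem {k : ℕ} (j : Fin k) :
    (WithLp.toLp 2 (fun l => if l = j then (1:ℝ) else 0) : E k) ∈ simplex k := by
  constructor
  · intro l; dsimp only; split <;> norm_num
  · simp [Finset.sum_ite_eq']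

lemma basis_sum {k : ℕ} (j : Fin k) (g : Fin k → ℝ) :
    ∑ l, (if l = j then (1:ℝ) else 0) * g l = g j := by
  simp [ite_mul, Finset.sum_ite_eq']
lemma foc {k : ℕ} (b : Fin k → ℝ) (μ : ℝ) (hμ : 0 < μ) (p : E k)
    (hps : ∑ l, p l = 1) (hpos : ∀ l, 0 < p l)
    (hmin : ∀ x ∈ simplex k, (∑ l, p l * b l) + μ/2 * ‖p‖^2 ≤ (∑ l, x l * b l) + μ/2 * ‖x‖^2) :
    ∀ i j, b i + μ * p i = b j + μ * p j := by
  intro i j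
  rcases eq_or_ne i j with rfl | hij
  · rfl
  by_contra hd
  set d : ℝ := (b i + μ * p i) - (b j + μ * p j) with hdd
  have hd0 : d ≠ 0 := sub_ne_zero.mpr hd
  have hd2 : 0 < d^2 := by positivity
  set s : ℝ := min (min (p i) (p j) / |d|) (1/(2*μ)) with hs
  have hs0 : 0 < s := lt_min (div_pos (lt_min (hpos i) (hpos j)) (abs_pos.mpr hd0)) (by positivity)
  set t : ℝ := -(s * d) with ht
  have habs : |t| ≤ min (p i) (p j) := by
    have h1 : s ≤ min (p i) (p j) / |d| := min_le_left _ _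
    have h2 : |t| = s * |d| := by rw [ht, abs_neg, abs_mul, abs_of_pos hs0]
    rw [le_div_iff₀ (abs_pos.mpr hd0)] at h1
    rw [h2]; exact h1
  have hsμ : μ * s ≤ 1/2 := by
    have h1 : s ≤ 1/(2*μ) := min_le_right _ _
    rw [le_div_iff₀ (by positivity : (0:ℝ) < 2*μ)] at h1
    nlinarith
  set x : E k := WithLp.toLp 2 (fun l => p l + (if l = i then t else 0) + (if l = j then -t else 0)) with hx
  have hxl : ∀ l, x l = p l + (if l = i then t else 0) + (if l = j then -t else 0) := fun l => rfl
  have hxmem : x ∈ simplex k := by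
    constructor
    · intro l
      rw [hxl]
      by_cases h1 : l = i
      · have hlj : ¬ l = j := fun h' => hij (h1.symm.trans h')
        rw [if_pos h1, if_neg hlj]
        have h3 : p l = p i := by rw [h1]
        have h4 : -t ≤ |t| := neg_le_abs t
        have h5 : min (p i) (p j) ≤ p i := min_le_left _ _
        linarith [habs]
      · rw [if_neg h1]
        by_cases h2 : l = j
        · rw [if_pos h2]
          have h3 : p l = p j := by rw [h2]
          have h4 : t ≤ |t| := le_abs_self t
          have h5 : min (p i) (p j) ≤ p j := min_le_right _ _
          linarith [habs]
        · rw [if_neg h2]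
          linarith [hpos l]
    · simp only [hxl]
      rw [Finset.sum_add_distrib, Finset.sum_add_distrib, hps,
        Finset.sum_ite_eq' Finset.univ i (fun _ => t),
        Finset.sum_ite_eq' Finset.univ j (fun _ => -t)]
      simp
  have hS1 : ∑ l, x l * b l = (∑ l, p l * b l) + t * b i + -(t * b j) := by
    have h1 : ∀ l ∈ Finset.univ, x l * b l
        = p l * b l + (if l = i then t * b l else 0) + (if l = j then -(t * b l) else 0) := by
      intro l _
      rw [hxl]
      by_cases h1 : l = i <;> by_cases h2 : l = j
      · exact absurd (h1.symm.trans h2) hij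
      · simp only [if_pos h1, if_neg h2]; ring
      · simp only [if_neg h1, if_pos h2]; ring
      · simp only [if_neg h1, if_neg h2]; ring
    rw [Finset.sum_congr rfl h1, Finset.sum_add_distrib, Finset.sum_add_distrib,
      Finset.sum_ite_eq' Finset.univ i (fun l => t * b l),
      Finset.sum_ite_eq' Finset.univ j (fun l => -(t * b l))]
    simp
  have hS2 : ∑ l, (x l)^2 = (∑ l, (p l)^2) + (2*t*p i + t^2) + (-(2*t*p j) + t^2) := by
    have h1 : ∀ l ∈ Finset.univ, (x l)^2
        = (p l)^2 + (if l = i then 2*t*p l + t^2 else 0) + (if l = j then -(2*t*p l) + t^2 else 0) := by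
      intro l _
      rw [hxl]
      by_cases h1 : l = i <;> by_cases h2 : l = j
      · exact absurd (h1.symm.trans h2) hij
      · simp only [if_pos h1, if_neg h2]; ring
      · simp only [if_neg h1, if_pos h2]; ring
      · simp only [if_neg h1, if_neg h2]; ring
    rw [Finset.sum_congr rfl h1, Finset.sum_add_distrib, Finset.sum_add_distrib,
      Finset.sum_ite_eq' Finset.univ i (fun l => 2*t*p l + t^2),
      Finset.sum_ite_eq' Finset.univ j (fun l => -(2*t*p l) + t^2)]
    simp
  have hkey := hmin x hxmem
  rw [normsq, normsq, hS1, hS2] at hkey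
  clear_value d s t x
  have expand : t * d + μ * t^2 = t * b i + -(t * b j)
      + μ/2 * ((2*t*p i + t^2) + (-(2*t*p j) + t^2)) := by rw [hdd]; ring
  have hkey2 : 0 ≤ t * d + μ * t^2 := by linarith [hkey, expand]
  have e1 : t * d + μ * t^2 = -(s * d^2 * (1 - μ * s)) := by rw [ht]; ring
  have hpos2 : 0 < s * d^2 * (1 - μ * s) := by
    apply mul_pos (mul_pos hs0 hd2); linarith
  linarith [hkey2, e1, hpos2]

/-- Analogue of Statement 0 for the independently perturbed game, where the
two players use possibly different perturbation strengths `μx` and `μy`. -/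
theorem independent_perturbation_never_exact
    {m n : ℕ} (hm : 0 < m) (hn : 0 < n)
    (A : Matrix (Fin m) (Fin n) ℝ)
    (xs : E m) (ys : E n) (μx μy : ℝ) (xμ : E m) (yμ : E n)
    -- (xs, ys) is a Nash equilibrium of the original game
    (hxs : xs ∈ simplex m) (hys : ys ∈ simplex n)
    (hNash₁ : ∀ x ∈ simplex m, pay A xs ys ≤ pay A x ys)
    (hNash₂ : ∀ y ∈ simplex n, pay A xs y ≤ pay A xs ys)
    -- it is the unique Nash equilibrium
    (huniq : ∀ x' ∈ simplex m, ∀ y' ∈ simplex n,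
      (∀ x ∈ simplex m, pay A x' y' ≤ pay A x y') →
      (∀ y ∈ simplex n, pay A x' y ≤ pay A x' y') →
      x' = xs ∧ y' = ys)
    -- the equilibrium is interior
    (hint₁ : ∀ i, 0 < xs i) (hint₂ : ∀ j, 0 < ys j)
    -- the equilibrium is not the uniform random profile
    (hne : ¬(xs = unif m ∧ ys = unif n))
    (hμx : 0 < μx) (hμy : 0 < μy)
    -- (xμ, yμ) is the (unique) saddle point of the independently perturbed game
    (hxμ : xμ ∈ simplex m) (hyμ : yμ ∈ simplex n)
    (hsaddle₁ : ∀ y ∈ simplex n,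
      pay A xμ y + μx / 2 * ‖xμ‖ ^ 2 - μy / 2 * ‖y‖ ^ 2 ≤
        pay A xμ yμ + μx / 2 * ‖xμ‖ ^ 2 - μy / 2 * ‖yμ‖ ^ 2)
    (hsaddle₂ : ∀ x ∈ simplex m,
      pay A xμ yμ + μx / 2 * ‖xμ‖ ^ 2 - μy / 2 * ‖yμ‖ ^ 2 ≤
        pay A x yμ + μx / 2 * ‖x‖ ^ 2 - μy / 2 * ‖yμ‖ ^ 2) :
    (μx ≠ (pay A (unif m) (unif n) - pay A xs ys) / (‖xs‖ ^ 2 - 1 / m) → xμ ≠ xs) ∧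
    (μy ≠ (pay A xs ys - pay A (unif m) (unif n)) / (‖ys‖ ^ 2 - 1 / n) → yμ ≠ ys) := by
  have hm0 : (m:ℝ) ≠ 0 := Nat.cast_ne_zero.mpr hm.ne'
  have hn0 : (n:ℝ) ≠ 0 := Nat.cast_ne_zero.mpr hn.ne'
  set v : ℝ := pay A xs ys with hv
  -- each column of xsᵀA has value v
  have hq : ∀ j, (∑ i, xs i * A i j) = v := by
    apply eq_of_le_weighted _ _ (fun j => ys j) ?_ hint₂ hys.2 ?_
    · intro j
      have h1 := hNash₂ _ (basis_mem j)
      rw [pay_expand] at h1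
      rw [basis_sum j (fun l => ∑ i, xs i * A i l)] at h1
      exact h1
    · rw [← pay_expand]
  -- each row of A·ys has value v
  have hp : ∀ i, (A.mulVec ys) i = v := by
    apply eq_of_ge_weighted _ _ (fun i => xs i) ?_ hint₁ hxs.2 ?_
    · intro i
      have h1 := hNash₁ _ (basis_mem i)
      rw [pay_eq] at h1
      rw [basis_sum i (A.mulVec ys)] at h1
      exact h1
    · rw [← pay_eq]
  have hpayxs : ∀ y ∈ simplex n, pay A xs y = v := by
    intro y hy
    rw [pay_expand]
    have h1 : ∀ j ∈ Finset.univ, y j * (∑ i, xs i * A i j) = y j * v := fun j _ => by rw [hq j]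
    rw [Finset.sum_congr rfl h1, ← Finset.sum_mul, hy.2, one_mul]
  have hpayys : ∀ x ∈ simplex m, pay A x ys = v := by
    intro x hx
    rw [pay_eq]
    have h1 : ∀ i ∈ Finset.univ, x i * (A.mulVec ys) i = x i * v := fun i _ => by rw [hp i]
    rw [Finset.sum_congr rfl h1, ← Finset.sum_mul, hx.2, one_mul]
  constructor
  · -- Part 1
    intro hμne heq
    rw [heq] at hsaddle₁ hsaddle₂ hxμ
    -- yμ is the uniform distribution
    have hyu : yμ = unif n := by
      apply eq_unif_of_min hn yμ hyμ
      intro z hz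
      have h1 := hsaddle₁ z hz
      rw [hpayxs z hz, hpayxs yμ hyμ] at h1
      nlinarith [h1, hμy]
    -- first-order conditions at xs
    have hminx : ∀ x ∈ simplex m, (∑ l, xs l * A.mulVec yμ l) + μx/2 * ‖xs‖^2
        ≤ (∑ l, x l * A.mulVec yμ l) + μx/2 * ‖x‖^2 := by
      intro x hx
      have h1 := hsaddle₂ x hx
      rw [pay_eq A xs yμ, pay_eq A x yμ] at h1
      linarith
    have hfo := foc (A.mulVec yμ) μx hμx xs hxs.2 hint₁ hminx
    -- weighted averages of the constant FOC value
    have hsum1 := weighted_const hm (fun i => A.mulVec yμ i + μx * xs i) hfo xs hxs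
    have hsum2 := weighted_const hm (fun i => A.mulVec yμ i + μx * xs i) hfo (unif m) (unif_mem hm)
    have e1 : ∑ i, xs i * (A.mulVec yμ i + μx * xs i)
        = (∑ i, xs i * A.mulVec yμ i) + μx * ‖xs‖^2 := by
      have h1 : ∀ i ∈ Finset.univ, xs i * (A.mulVec yμ i + μx * xs i)
          = xs i * A.mulVec yμ i + μx * (xs i)^2 := fun i _ => by ring
      rw [Finset.sum_congr rfl h1, Finset.sum_add_distrib, ← Finset.mul_sum, ← normsq]
    have e2 : ∑ i, unif m i * (A.mulVec yμ i + μx * xs i)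
        = (∑ i, unif m i * A.mulVec yμ i) + μx * (1/(m:ℝ)) := by
      have h1 : ∀ i ∈ Finset.univ, unif m i * (A.mulVec yμ i + μx * xs i)
          = unif m i * A.mulVec yμ i + (μx * (m:ℝ)⁻¹) * xs i := fun i _ => by
        show (m:ℝ)⁻¹ * (A.mulVec yμ i + μx * xs i) = (m:ℝ)⁻¹ * A.mulVec yμ i + (μx * (m:ℝ)⁻¹) * xs i
        ring
      rw [Finset.sum_congr rfl h1, Finset.sum_add_distrib, ← Finset.mul_sum, hxs.2, mul_one,
        one_div]
    have e3 : ∑ i, xs i * A.mulVec yμ i = v := by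
      rw [← pay_eq]; exact hpayxs yμ hyμ
    have e4 : ∑ i, unif m i * A.mulVec yμ i = pay A (unif m) (unif n) := by
      rw [← pay_eq, hyu]
    have key : v + μx * ‖xs‖^2 = pay A (unif m) (unif n) + μx * (1/(m:ℝ)) := by
      rw [← e3, ← e4]
      have := hsum1.trans hsum2.symm
      dsimp only at this
      linarith [e1, e2, this]
    by_cases hxsu : xs = unif m
    · have hbc : ∀ i i', (A.mulVec yμ) i = (A.mulVec yμ) i' := by
        intro i i'
        have h1 := hfo i i'
        rw [hxsu] at h1
        simp only [unif] at h1
        linarith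
      have hconst : ∀ x ∈ simplex m, pay A x yμ = (A.mulVec yμ) ⟨0,hm⟩ := fun x hx => by
        rw [pay_eq]; exact weighted_const hm _ hbc x hx
      have hNE := huniq xs hxs yμ hyμ
        (fun x hx => by rw [hconst x hx, hconst xs hxs])
        (fun y hy => by rw [hpayxs y hy, hpayxs yμ hyμ])
      exact hne ⟨hxsu, hNE.2 ▸ hyu⟩
    · have hd := normsq_sub_pos hm xs hxs hxsu
      apply hμne
      rw [eq_div_iff (ne_of_gt hd)]
      linarith [key]
  · -- Part 2
    intro hμne heq
    rw [heq] at hsaddle₁ hsaddle₂ hyμ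
    have hxu : xμ = unif m := by
      apply eq_unif_of_min hm xμ hxμ
      intro z hz
      have h1 := hsaddle₂ z hz
      rw [hpayys z hz, hpayys xμ hxμ] at h1
      nlinarith [h1, hμx]
    have hminy : ∀ y ∈ simplex n, (∑ l, ys l * -(∑ i, xμ i * A i l)) + μy/2 * ‖ys‖^2
        ≤ (∑ l, y l * -(∑ i, xμ i * A i l)) + μy/2 * ‖y‖^2 := by
      intro y hy
      have h1 := hsaddle₁ y hy
      rw [pay_expand A xμ ys, pay_expand A xμ y] at h1
      have hng : ∀ (w : E n), ∑ j, w j * -(∑ i, xμ i * A i j) = -∑ j, w j * (∑ i, xμ i * A i j) := by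
        intro w; simp [mul_neg]
      rw [hng ys, hng y]
      linarith
    have hfo := foc (fun j => -(∑ i, xμ i * A i j)) μy hμy ys hys.2 hint₂ hminy
    have hsum1 := weighted_const hn (fun j => -(∑ i, xμ i * A i j) + μy * ys j) hfo ys hys
    have hsum2 := weighted_const hn (fun j => -(∑ i, xμ i * A i j) + μy * ys j) hfo (unif n) (unif_mem hn)
    have e1 : ∑ j, ys j * (-(∑ i, xμ i * A i j) + μy * ys j)
        = -(∑ j, ys j * (∑ i, xμ i * A i j)) + μy * ‖ys‖^2 := by
      have h1 : ∀ j ∈ Finset.univ, ys j * (-(∑ i, xμ i * A i j) + μy * ys j)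
          = -(ys j * (∑ i, xμ i * A i j)) + μy * (ys j)^2 := fun j _ => by ring
      rw [Finset.sum_congr rfl h1, Finset.sum_add_distrib, ← Finset.mul_sum, ← normsq,
        Finset.sum_neg_distrib]
    have e2 : ∑ j, unif n j * (-(∑ i, xμ i * A i j) + μy * ys j)
        = -(∑ j, unif n j * (∑ i, xμ i * A i j)) + μy * (1/(n:ℝ)) := by
      have h1 : ∀ j ∈ Finset.univ, unif n j * (-(∑ i, xμ i * A i j) + μy * ys j)
          = -(unif n j * (∑ i, xμ i * A i j)) + (μy * (n:ℝ)⁻¹) * ys j := fun j _ => by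
        show (n:ℝ)⁻¹ * (-(∑ i, xμ i * A i j) + μy * ys j)
            = -((n:ℝ)⁻¹ * (∑ i, xμ i * A i j)) + (μy * (n:ℝ)⁻¹) * ys j
        ring
      rw [Finset.sum_congr rfl h1, Finset.sum_add_distrib, ← Finset.mul_sum, hys.2, mul_one,
        Finset.sum_neg_distrib, one_div]
    have e3 : ∑ j, ys j * (∑ i, xμ i * A i j) = v := by
      rw [← pay_expand]; exact hpayys xμ hxμ
    have e4 : ∑ j, unif n j * (∑ i, xμ i * A i j) = pay A (unif m) (unif n) := by
      rw [← pay_expand, hxu]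
    have key : -v + μy * ‖ys‖^2 = -(pay A (unif m) (unif n)) + μy * (1/(n:ℝ)) := by
      rw [← e3, ← e4]
      have := hsum1.trans hsum2.symm
      dsimp only at this
      linarith [e1, e2, this]
    by_cases hysu : ys = unif n
    · have hbc : ∀ j j', (∑ i, xμ i * A i j) = (∑ i, xμ i * A i j') := by
        intro j j'
        have h1 := hfo j j'
        rw [hysu] at h1
        simp only [unif] at h1
        linarith
      have hconst : ∀ y ∈ simplex n, pay A xμ y = (∑ i, xμ i * A i ⟨0,hn⟩) := fun y hy => by
        rw [pay_expand]; exact weighted_const hn _ hbc y hy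
      have hNE := huniq xμ hxμ ys hys
        (fun x hx => by rw [hpayys x hx, hpayys xμ hxμ])
        (fun y hy => by rw [hconst y hy, hconst ys hys])
      exact hne ⟨hNE.1 ▸ hxu, hysu⟩
    · have hd := normsq_sub_pos hn ys hys hysu
      apply hμne
      rw [eq_div_iff (ne_of_gt hd)]
      linarith [key]
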